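/- Every expansive homeomorphism of a compact metric space with both the shadowing property and the specification property has the two-sided limit shadowing property. -/

import Mathlib

open Filter Topology

/-- The `n`-th iterate (for `n : ℤ`) of a homeomorphism. -/
def iterZ {X : Type*} [MetricSpace X] (f : X ≃ₜ X) (n : ℤ) (x : X) : X :=
  (f.toEquiv ^ n) x

/-- `f` has the two-sided limit shadowing property: every sequence `(x_i)_{i∈ℤ}` with
`d(f(x_i), x_{i+1}) → 0` as `|i| → ∞` admits `y` with `d(f^i(y), x_i) → 0` as `|i| → ∞`. -/
def TwoSidedLimitShadowing {X : Type*} [MetricSpace X] (f : X ≃ₜ X) : Prop :=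
  ∀ x : ℤ → X,
    Tendsto (fun i => dist (f (x i)) (x (i + 1))) cofinite (𝓝 0) →
    ∃ y : X, Tendsto (fun i => dist (iterZ f i y) (x i)) cofinite (𝓝 0)

/-- The (pseudo-orbit) shadowing property. -/
def ShadowingProp {X : Type*} [MetricSpace X] (f : X ≃ₜ X) : Prop :=
  ∀ ε > 0, ∃ δ > 0, ∀ x : ℤ → X,
    (∀ i, dist (f (x i)) (x (i + 1)) < δ) →
    ∃ y, ∀ i, dist (iterZ f i y) (x i) < ε

/-- Expansiveness of a homeomorphism. -/
def ExpansiveH {X : Type*} [MetricSpace X] (f : X ≃ₜ X) : Prop :=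
  ∃ ε > 0, ∀ x y : X, (∀ i : ℤ, dist (iterZ f i x) (iterZ f i y) < ε) → x = y

/-- The specification property: for every `ε > 0` there is `L` such that every `L`-spaced
specification (finite family of orbit pieces on integer intervals `[a i, b i]` whose
consecutive intervals are at least `L` apart) is `ε`-shadowed. -/
def SpecificationProp {X : Type*} [MetricSpace X] (f : X ≃ₜ X) : Prop :=
  ∀ ε > 0, ∃ L : ℕ, ∀ (m : ℕ) (a b : Fin m → ℤ) (P : ℤ → X),
    (∀ i, a i ≤ b i) →
    (∀ (i : ℕ) (h : i + 1 < m), b ⟨i, Nat.lt_of_succ_lt h⟩ + L ≤ a ⟨i + 1, h⟩) →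
    (∀ (i : Fin m), ∀ t₁ ∈ Set.Icc (a i) (b i), ∀ t₂ ∈ Set.Icc (a i) (b i),
      iterZ f (t₂ - t₁) (P t₁) = P t₂) →
    ∃ y, ∀ (i : Fin m), ∀ n ∈ Set.Icc (a i) (b i), dist (iterZ f n y) (P n) < ε

/-- The (positive) limit shadowing property. -/
def LimitShadowing {X : Type*} [MetricSpace X] (f : X ≃ₜ X) : Prop :=
  ∀ x : ℕ → X, Tendsto (fun n => dist (f (x n)) (x (n + 1))) atTop (𝓝 0) →
    ∃ y, Tendsto (fun n : ℕ => dist (iterZ f n y) (x n)) atTop (𝓝 0)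

/-- The negative limit shadowing property. -/
def NegLimitShadowing {X : Type*} [MetricSpace X] (f : X ≃ₜ X) : Prop :=
  ∀ x : ℤ → X, Tendsto (fun n => dist (f (x n)) (x (n + 1))) atBot (𝓝 0) →
    ∃ y, Tendsto (fun n : ℤ => dist (iterZ f n y) (x n)) atBot (𝓝 0)

section Aux

variable {X : Type*} [MetricSpace X]

lemma iterZ_add (f : X ≃ₜ X) (a b : ℤ) (x : X) :
    iterZ f (a + b) x = iterZ f a (iterZ f b x) := by
  simp [iterZ, zpow_add, Equiv.Perm.mul_apply]

lemma iterZ_zero (f : X ≃ₜ X) (x : X) : iterZ f 0 x = x := by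
  simp [iterZ]

lemma iterZ_one (f : X ≃ₜ X) (x : X) : iterZ f 1 x = f x := by
  simp [iterZ]

lemma iterZ_neg_one (f : X ≃ₜ X) (x : X) : iterZ f (-1) x = f.symm x := by
  simp only [iterZ, zpow_neg_one]
  rfl

lemma iterZ_succ (f : X ≃ₜ X) (n : ℤ) (x : X) : iterZ f (n + 1) x = f (iterZ f n x) := by
  rw [show n + 1 = 1 + n by ring, iterZ_add, iterZ_one]

lemma iterZ_continuous (f : X ≃ₜ X) (n : ℤ) : Continuous (iterZ f n) := by
  induction n using Int.induction_on with
  | zero => simpa [funext (iterZ_zero f)] using continuous_id'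
  | succ k ih =>
      have h : ∀ x, iterZ f (k + 1) x = f (iterZ f k x) := iterZ_succ f k
      rw [funext h]; exact f.continuous.comp ih
  | pred k ih =>
      have h : ∀ x, iterZ f (-(k : ℤ) - 1) x = f.symm (iterZ f (-k) x) := by
        intro x
        rw [show (-(k : ℤ) - 1) = (-1) + (-k) by ring, iterZ_add, iterZ_neg_one]
      rw [funext h]; exact f.symm.continuous.comp ih

/-- Uniform expansiveness. -/
lemma lemA [CompactSpace X] (f : X ≃ₜ X) {c : ℝ} (hc : 0 < c)
    (hexpc : ∀ x y : X, (∀ i : ℤ, dist (iterZ f i x) (iterZ f i y) < c) → x = y)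
    {ε : ℝ} (hε : 0 < ε) :
    ∃ N : ℕ, ∀ x y : X,
      (∀ t : ℤ, |t| ≤ (N : ℤ) → dist (iterZ f t x) (iterZ f t y) ≤ c / 2) →
      dist x y < ε := by
  by_contra h
  push_neg at h
  choose u v hu hv using h
  obtain ⟨p, -, φ, hφ, hlim⟩ := (isCompact_univ (X := X × X)).tendsto_subseq
    (x := fun n => (u n, v n)) (fun n => Set.mem_univ _)
  have key : ∀ i : ℤ, dist (iterZ f i p.1) (iterZ f i p.2) ≤ c / 2 := by
    intro i
    have hg : Continuous fun q : X × X => dist (iterZ f i q.1) (iterZ f i q.2) :=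
      ((iterZ_continuous f i).comp continuous_fst).dist
        ((iterZ_continuous f i).comp continuous_snd)
    have hten : Tendsto (fun n => dist (iterZ f i (u (φ n))) (iterZ f i (v (φ n))))
        atTop (𝓝 (dist (iterZ f i p.1) (iterZ f i p.2))) :=
      (hg.tendsto p).comp hlim
    refine le_of_tendsto hten ?_
    filter_upwards [eventually_ge_atTop i.natAbs] with n hn
    exact hu (φ n) i (by
      have : (i.natAbs : ℤ) ≤ (φ n : ℤ) := by exact_mod_cast hn.trans (hφ.id_le n)
      calc |i| = (i.natAbs : ℤ) := (Int.abs_eq_natAbs i)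
        _ ≤ (φ n : ℤ) := this)
  have heq : p.1 = p.2 := hexpc _ _ fun i => lt_of_le_of_lt (key i) (by linarith)
  have hdist : ε ≤ dist p.1 p.2 := by
    have hten : Tendsto (fun n => dist (u (φ n)) (v (φ n))) atTop (𝓝 (dist p.1 p.2)) :=
      ((continuous_fst.dist continuous_snd).tendsto p).comp hlim
    exact ge_of_tendsto hten (Eventually.of_forall fun n => hv (φ n))
  rw [heq, dist_self] at hdist
  linarith

/-- Limit shadowing for globally small two-sided pseudo-orbits. -/
lemma lemB [CompactSpace X] (f : X ≃ₜ X) {c : ℝ} (hc : 0 < c)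
    (hexpc : ∀ x y : X, (∀ i : ℤ, dist (iterZ f i x) (iterZ f i y) < c) → x = y)
    (hsh : ShadowingProp f) {δ₀ : ℝ}
    (hδ₀ : ∀ z : ℤ → X, (∀ i, dist (f (z i)) (z (i + 1)) < δ₀) →
        ∃ y, ∀ i, dist (iterZ f i y) (z i) < c / 4)
    (z : ℤ → X) (hz : ∀ i, dist (f (z i)) (z (i + 1)) < δ₀)
    (ht : Tendsto (fun i => dist (f (z i)) (z (i + 1))) cofinite (𝓝 0)) :
    ∃ y, Tendsto (fun i => dist (iterZ f i y) (z i)) cofinite (𝓝 0) := by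
  obtain ⟨y, hy⟩ := hδ₀ z hz
  refine ⟨y, ?_⟩
  rw [Int.cofinite_eq, tendsto_sup] at ht ⊢
  obtain ⟨htB, htT⟩ := ht
  have habs : ∀ (l : Filter ℤ) (u : ℤ → X) (v : ℤ → X),
      (∀ ε > 0, ∀ᶠ i in l, dist (u i) (v i) < ε) →
      Tendsto (fun i => dist (u i) (v i)) l (𝓝 0) := by
    intro l u v h
    rw [Metric.tendsto_nhds]
    intro ε hε
    filter_upwards [h ε hε] with i hi
    rwa [Real.dist_0_eq_abs, abs_of_nonneg dist_nonneg]
  have herr : ∀ (l : Filter ℤ),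
      Tendsto (fun i => dist (f (z i)) (z (i + 1))) l (𝓝 0) →
      ∀ ε > 0, ∀ᶠ i in l, dist (f (z i)) (z (i + 1)) < ε := by
    intro l h ε hε
    filter_upwards [Metric.tendsto_nhds.mp h ε hε] with i hi
    rwa [Real.dist_0_eq_abs, abs_of_nonneg dist_nonneg] at hi
  constructor
  · -- atBot
    apply habs
    intro ε hε
    have hε₁ : 0 < min (ε / 2) (c / 4) := lt_min (by linarith) (by linarith)
    obtain ⟨δ₁, hδ₁pos, hδ₁⟩ := hsh _ hε₁
    obtain ⟨M, hM⟩ := eventually_atBot.mp (herr atBot htB δ₁ hδ₁pos)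
    set zf : ℤ → X := fun j => if j ≤ M then z j else iterZ f (j - M) (z M) with hzf
    have zf_low : ∀ j, j ≤ M → zf j = z j := fun j hj => if_pos hj
    have zf_high : ∀ j, ¬ j ≤ M → zf j = iterZ f (j - M) (z M) := fun j hj => if_neg hj
    have hpo : ∀ j, dist (f (zf j)) (zf (j + 1)) < δ₁ := by
      intro j
      by_cases hj : j + 1 ≤ M
      · rw [zf_low j (by omega), zf_low (j + 1) hj]
        exact hM j (by omega)
      · by_cases hj' : j ≤ M
        · have hjM : j = M := by omega
          rw [zf_low j hj', zf_high (j + 1) hj, hjM]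
          have : iterZ f (M + 1 - M) (z M) = f (z M) := by
            rw [show M + 1 - M = (1 : ℤ) by ring, iterZ_one]
          rw [this, dist_self]; exact hδ₁pos
        · rw [zf_high j hj', zf_high (j + 1) hj]
          have : iterZ f (j + 1 - M) (z M) = f (iterZ f (j - M) (z M)) := by
            rw [show j + 1 - M = (j - M) + 1 by ring, iterZ_succ]
          rw [this, dist_self]; exact hδ₁pos
    obtain ⟨w, hw⟩ := hδ₁ zf hpo
    obtain ⟨N, hN⟩ := lemA f hc hexpc (half_pos hε)
    rw [eventually_atBot]
    refine ⟨M - N, fun i hi => ?_⟩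
    have hyw : dist (iterZ f i y) (iterZ f i w) < ε / 2 := by
      apply hN
      intro t htN
      rw [← iterZ_add f t i y, ← iterZ_add f t i w]
      have htab := abs_le.mp htN
      have hmem : t + i ≤ M := by omega
      have h1 : dist (iterZ f (t + i) y) (z (t + i)) < c / 4 := hy (t + i)
      have h2 : dist (iterZ f (t + i) w) (z (t + i)) < c / 4 := by
        have := hw (t + i)
        rw [zf_low (t + i) hmem] at this
        exact this.trans_le (min_le_right _ _)
      calc dist (iterZ f (t + i) y) (iterZ f (t + i) w)
          ≤ dist (iterZ f (t + i) y) (z (t + i)) + dist (z (t + i)) (iterZ f (t + i) w) :=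
            dist_triangle _ _ _
        _ ≤ c / 4 + c / 4 := by rw [dist_comm (z (t + i))]; exact add_le_add h1.le h2.le
        _ = c / 2 := by ring
    have hwz : dist (iterZ f i w) (z i) < min (ε / 2) (c / 4) := by
      have := hw i
      rwa [zf_low i (by omega)] at this
    calc dist (iterZ f i y) (z i)
        ≤ dist (iterZ f i y) (iterZ f i w) + dist (iterZ f i w) (z i) := dist_triangle _ _ _
      _ < ε / 2 + min (ε / 2) (c / 4) := add_lt_add hyw hwz
      _ ≤ ε / 2 + ε / 2 := by gcongr; exact min_le_left _ _
      _ = ε := by ring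
  · -- atTop
    apply habs
    intro ε hε
    have hε₁ : 0 < min (ε / 2) (c / 4) := lt_min (by linarith) (by linarith)
    obtain ⟨δ₁, hδ₁pos, hδ₁⟩ := hsh _ hε₁
    obtain ⟨M, hM⟩ := eventually_atTop.mp (herr atTop htT δ₁ hδ₁pos)
    set zf : ℤ → X := fun j => if M ≤ j then z j else iterZ f (j - M) (z M) with hzf
    have zf_high : ∀ j, M ≤ j → zf j = z j := fun j hj => if_pos hj
    have zf_low : ∀ j, ¬ M ≤ j → zf j = iterZ f (j - M) (z M) := fun j hj => if_neg hj
    have hpo : ∀ j, dist (f (zf j)) (zf (j + 1)) < δ₁ := by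
      intro j
      by_cases hj : M ≤ j
      · rw [zf_high j hj, zf_high (j + 1) (by omega)]
        exact hM j hj
      · rw [zf_low j hj]
        by_cases hj' : M ≤ j + 1
        · have hjM : j + 1 = M := by omega
          rw [zf_high (j + 1) hj', hjM]
          have : f (iterZ f (j - M) (z M)) = iterZ f (j - M + 1) (z M) := (iterZ_succ f _ _).symm
          rw [this, show j - M + 1 = (0 : ℤ) by omega, iterZ_zero, dist_self]
          exact hδ₁pos
        · rw [zf_low (j + 1) hj']
          have : f (iterZ f (j - M) (z M)) = iterZ f (j + 1 - M) (z M) := by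
            rw [show j + 1 - M = (j - M) + 1 by ring, iterZ_succ]
          rw [this, dist_self]; exact hδ₁pos
    obtain ⟨w, hw⟩ := hδ₁ zf hpo
    obtain ⟨N, hN⟩ := lemA f hc hexpc (half_pos hε)
    rw [eventually_atTop]
    refine ⟨M + N, fun i hi => ?_⟩
    have hyw : dist (iterZ f i y) (iterZ f i w) < ε / 2 := by
      apply hN
      intro t htN
      rw [← iterZ_add f t i y, ← iterZ_add f t i w]
      have htab := abs_le.mp htN
      have hmem : M ≤ t + i := by omega
      have h1 : dist (iterZ f (t + i) y) (z (t + i)) < c / 4 := hy (t + i)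
      have h2 : dist (iterZ f (t + i) w) (z (t + i)) < c / 4 := by
        have := hw (t + i)
        rw [zf_high (t + i) hmem] at this
        exact this.trans_le (min_le_right _ _)
      calc dist (iterZ f (t + i) y) (iterZ f (t + i) w)
          ≤ dist (iterZ f (t + i) y) (z (t + i)) + dist (z (t + i)) (iterZ f (t + i) w) :=
            dist_triangle _ _ _
        _ ≤ c / 4 + c / 4 := by rw [dist_comm (z (t + i))]; exact add_le_add h1.le h2.le
        _ = c / 2 := by ring
    have hwz : dist (iterZ f i w) (z i) < min (ε / 2) (c / 4) := by
      have := hw i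
      rwa [zf_high i (by omega)] at this
    calc dist (iterZ f i y) (z i)
        ≤ dist (iterZ f i y) (iterZ f i w) + dist (iterZ f i w) (z i) := dist_triangle _ _ _
      _ < ε / 2 + min (ε / 2) (c / 4) := add_lt_add hyw hwz
      _ ≤ ε / 2 + ε / 2 := by gcongr; exact min_le_left _ _
      _ = ε := by ring

end Aux

/-- Every expansive homeomorphism of a compact metric space with the shadowing and
specification properties has the two-sided limit shadowing property. -/
theorem stmt5 {X : Type*} [MetricSpace X] [CompactSpace X] (f : X ≃ₜ X)
    (hexp : ExpansiveH f) (hsh : ShadowingProp f) (hspec : SpecificationProp f) :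
    TwoSidedLimitShadowing f := by
  obtain ⟨c, hc, hexpc⟩ := hexp
  obtain ⟨δ₀, hδ₀pos, hδ₀⟩ := hsh (c / 4) (by linarith)
  intro x htend
  -- uniform continuity of f
  have hfu : UniformContinuous f := CompactSpace.uniformContinuous_of_continuous f.continuous
  obtain ⟨η, hηpos, hη⟩ := Metric.uniformContinuous_iff.mp hfu δ₀ hδ₀pos
  -- specification constant for min η δ₀
  obtain ⟨L, hL⟩ := hspec (min η δ₀) (lt_min hηpos hδ₀pos)
  -- tails of the pseudo-orbit errors
  rw [Int.cofinite_eq, tendsto_sup] at htend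
  obtain ⟨htB, htT⟩ := htend
  have herr : ∀ (l : Filter ℤ),
      Tendsto (fun i => dist (f (x i)) (x (i + 1))) l (𝓝 0) →
      ∀ ε > 0, ∀ᶠ i in l, dist (f (x i)) (x (i + 1)) < ε := by
    intro l h ε hε
    filter_upwards [Metric.tendsto_nhds.mp h ε hε] with i hi
    rwa [Real.dist_0_eq_abs, abs_of_nonneg dist_nonneg] at hi
  obtain ⟨M₁, hM₁⟩ := eventually_atTop.mp (herr atTop htT δ₀ hδ₀pos)
  obtain ⟨M₂, hM₂⟩ := eventually_atBot.mp (herr atBot htB δ₀ hδ₀pos)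
  set M : ℤ := max (max M₁ (-M₂)) (max (L : ℤ) 1) with hM
  have hM1 : M₁ ≤ M := le_trans (le_max_left _ _) (le_max_left _ _)
  have hM2 : -M₂ ≤ M := le_trans (le_max_right _ _) (le_max_left _ _)
  have hML : (L : ℤ) ≤ M := le_trans (le_max_left _ _) (le_max_right _ _)
  have hMone : 1 ≤ M := le_trans (le_max_right _ _) (le_max_right _ _)
  -- specification: glue the two tails with a true orbit segment
  obtain ⟨w, hw⟩ := hL 2 ![(-M), M] ![(-M), M] x
    (fun i => le_refl _)
    (by
      intro i h
      have hi0 : i = 0 := by omega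
      subst hi0
      show -M + (L : ℤ) ≤ M
      omega)
    (by
      intro i t₁ h₁ t₂ h₂
      obtain ⟨ha1, hb1⟩ := Set.mem_Icc.mp h₁
      obtain ⟨ha2, hb2⟩ := Set.mem_Icc.mp h₂
      have h12 : t₁ = t₂ := le_antisymm (hb1.trans ha2) (hb2.trans ha1)
      rw [h12, sub_self, iterZ_zero])
  have hwm : dist (iterZ f (-M) w) (x (-M)) < min η δ₀ := by
    have := hw 0 (-M) (by simp [Set.mem_Icc])
    simpa using this
  have hwM : dist (iterZ f M w) (x M) < min η δ₀ := by
    have := hw 1 M (by simp [Set.mem_Icc])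
    simpa using this
  -- the spliced pseudo-orbit
  set z : ℤ → X := fun i => if i ≤ -M ∨ M ≤ i then x i else iterZ f i w with hzdef
  have zlow : ∀ j, j ≤ -M → z j = x j := fun j hj => if_pos (Or.inl hj)
  have zhigh : ∀ j, M ≤ j → z j = x j := fun j hj => if_pos (Or.inr hj)
  have zmid : ∀ j, -M < j → j < M → z j = iterZ f j w := fun j h1 h2 =>
    if_neg (by omega)
  have hz : ∀ i, dist (f (z i)) (z (i + 1)) < δ₀ := by
    intro i
    by_cases hA : i + 1 ≤ -M
    · rw [zlow i (by omega), zlow (i + 1) hA]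
      exact hM₂ i (by omega)
    · by_cases hB : i ≤ -M
      · -- i = -M
        have hiM : i = -M := by omega
        rw [zlow i hB, zmid (i + 1) (by omega) (by omega), hiM]
        have : iterZ f (-M + 1) w = f (iterZ f (-M) w) := iterZ_succ f _ _
        rw [this]
        exact hη (by rw [dist_comm]; exact hwm.trans_le (min_le_left _ _))
      · by_cases hC : i + 1 < M
        · rw [zmid i (by omega) (by omega), zmid (i + 1) (by omega) hC,
            ← iterZ_succ f i w, dist_self]
          exact hδ₀pos
        · by_cases hD : i < M
          · -- i = M - 1
            rw [zmid i (by omega) hD, zhigh (i + 1) (by omega), ← iterZ_succ f i w]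
            have hiM : i + 1 = M := by omega
            rw [hiM]
            exact hwM.trans_le (min_le_right _ _)
          · rw [zhigh i (by omega), zhigh (i + 1) (by omega)]
            exact hM₁ i (by omega)
  have hzt : Tendsto (fun i => dist (f (z i)) (z (i + 1))) cofinite (𝓝 0) := by
    rw [Int.cofinite_eq, tendsto_sup]
    constructor
    · refine htB.congr' ?_
      filter_upwards [eventually_le_atBot (-M - 1)] with i hi
      rw [zlow i (by omega), zlow (i + 1) (by omega)]
    · refine htT.congr' ?_
      filter_upwards [eventually_ge_atTop M] with i hi
      rw [zhigh i hi, zhigh (i + 1) (by omega)]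
  obtain ⟨y, hy⟩ := lemB f hc hexpc hsh hδ₀ z hz hzt
  refine ⟨y, ?_⟩
  rw [Int.cofinite_eq, tendsto_sup] at hy ⊢
  obtain ⟨hyB, hyT⟩ := hy
  constructor
  · refine hyB.congr' ?_
    filter_upwards [eventually_le_atBot (-M)] with i hi
    rw [zlow i hi]
  · refine hyT.congr' ?_
    filter_upwards [eventually_ge_atTop M] with i hi
    rw [zhigh i hi]
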